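/- Let B, ν, μ, ω be positive natural numbers with ω ≥ 1. The number of functions f : Fin μ → Fin (B·ν) whose values lie in at most ω of the B consecutive ν-sized blocks equals Σ_{k=1}^{ω} S(μ, k) · P(B, k) · ν^μ. -/

import Mathlib

open Finset

/-- Stirling numbers of the second kind: `stirling n k` counts partitions of an
`n`-element set into `k` non-empty unlabeled blocks. -/
def stirling : ℕ → ℕ → ℕ
  | 0, 0 => 1
  | 0, _ + 1 => 0
  | _ + 1, 0 => 0
  | n + 1, k + 1 => (k + 1) * stirling n (k + 1) + stirling n k

noncomputable def imCount (n : ℕ) {α : Type*} [Fintype α] [DecidableEq α] (s : Finset α) : ℕ :=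
  (univ.filter fun g : Fin n → α => Finset.image g univ = s).card

lemma imCount_eq {α : Type*} [Fintype α] [DecidableEq α] (n : ℕ) (s : Finset α) :
    imCount n s = imCount n (univ : Finset (Fin s.card)) := by
  classical
  have e : s ≃ Fin s.card := Fintype.equivFinOfCardEq (Fintype.card_coe s)
  unfold imCount
  have hmem : ∀ (g : Fin n → α), g ∈ (univ.filter fun g : Fin n → α => Finset.image g univ = s) →
      ∀ x, g x ∈ s := by
    intro g hg x
    rw [mem_filter] at hg
    rw [← hg.2]; exact mem_image_of_mem _ (mem_univ x)
  refine card_bij' (fun g hg => fun x => e ⟨g x, hmem g hg x⟩)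
    (fun h _ => fun x => ((e.symm (h x)) : α)) ?_ ?_ ?_ ?_
  · intro g hg
    rw [mem_filter]
    refine ⟨mem_univ _, ?_⟩
    ext c
    simp only [mem_univ, iff_true, mem_image]
    obtain ⟨b, hb⟩ : ∃ b : s, e b = c := ⟨e.symm c, e.apply_symm_apply c⟩
    have : (b : α) ∈ Finset.image g univ := by
      rw [mem_filter] at hg; rw [hg.2]; exact b.2
    obtain ⟨x, -, hx⟩ := mem_image.1 this
    have hbx : (⟨g x, hmem g hg x⟩ : s) = b := Subtype.ext hx
    exact ⟨x, by simp [hbx, hb]⟩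
  · intro h hh
    rw [mem_filter] at hh ⊢
    refine ⟨mem_univ _, ?_⟩
    ext b
    simp only [mem_image]
    constructor
    · rintro ⟨x, -, rfl⟩; exact (e.symm (h x)).2
    · intro hb
      obtain ⟨x, -, hx⟩ := mem_image.1 (by rw [hh.2]; exact mem_univ (e ⟨b, hb⟩) :
        e ⟨b, hb⟩ ∈ Finset.image h univ)
      exact ⟨x, mem_univ x, by rw [hx, e.symm_apply_apply]⟩
  · intro g hg; funext x; simp
  · intro h hh; funext x
    simp only []
    rw [show (⟨((e.symm (h x)) : α), _⟩ : s) = e.symm (h x) from Subtype.ext rfl,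
      e.apply_symm_apply]

lemma filter_succ_card (n k : ℕ) (P : (Fin (n+1) → Fin k) → Prop) [DecidablePred P] :
    (univ.filter P).card
      = ∑ a : Fin k, (univ.filter fun g : Fin n → Fin k => P (Fin.cons a g)).card := by
  classical
  rw [← card_sigma]
  refine card_bij' (fun f _ => ⟨f 0, Fin.tail f⟩) (fun p _ => Fin.cons p.1 p.2) ?_ ?_ ?_ ?_
  · intro f hf
    rw [mem_filter] at hf
    simp only [mem_sigma, mem_univ, mem_filter, true_and]
    rw [Fin.cons_self_tail]
    exact hf.2
  · rintro ⟨a, g⟩ hp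
    simp only [mem_sigma, mem_univ, mem_filter, true_and] at hp
    simp only [mem_filter, mem_univ, true_and]
    exact hp
  · intro f _; exact Fin.cons_self_tail f
  · rintro ⟨a, g⟩ _
    simp [Fin.tail_cons]

lemma image_cons (n k : ℕ) (a : Fin k) (g : Fin n → Fin k) :
    Finset.image (Fin.cons a g) univ = insert a (Finset.image g univ) := by
  ext b
  simp only [mem_image, mem_insert, mem_univ, true_and]
  rw [Fin.exists_fin_succ]
  simp [eq_comm, Fin.cons_zero, Fin.cons_succ]

lemma insert_eq_univ_iff {k : ℕ} (a : Fin k) (t : Finset (Fin k)) :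
    insert a t = univ ↔ t = univ ∨ t = univ.erase a := by
  constructor
  · intro h
    by_cases ha : a ∈ t
    · left; rwa [insert_eq_self.2 ha] at h
    · right
      ext b
      simp only [mem_erase, mem_univ, and_true]
      constructor
      · intro hb; rintro rfl; exact ha hb
      · intro hb
        have : b ∈ insert a t := h ▸ mem_univ b
        rcases mem_insert.1 this with rfl | h'
        · exact absurd rfl hb
        · exact h'
  · rintro (rfl | rfl)
    · exact insert_eq_self.2 (mem_univ a)
    · rw [insert_erase (mem_univ a)]

lemma T_eq (n k : ℕ) : imCount n (univ : Finset (Fin k)) = stirling n k * k.factorial := by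
  classical
  induction n generalizing k with
  | zero =>
    unfold imCount
    match k with
    | 0 =>
      rw [show (univ.filter fun g : Fin 0 → Fin 0 => Finset.image g univ = univ) = univ from by
        ext g; simp [Finset.eq_empty_of_isEmpty]]
      simp [stirling]
    | k + 1 =>
      rw [show (univ.filter fun g : Fin 0 → Fin (k+1) => Finset.image g univ = univ) = ∅ from by
        ext g
        simp only [mem_filter, mem_univ, true_and, notMem_empty, iff_false]
        intro h
        have := h ▸ mem_univ (0 : Fin (k+1))
        simp at this]
      simp [stirling]
  | succ n ih =>
    match k with
    | 0 =>
      unfold imCount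
      rw [show (univ.filter fun g : Fin (n+1) → Fin 0 => Finset.image g univ = univ) = ∅ from by
        ext g; exact absurd (g 0).2 (by simp)]
      simp [stirling]
    | k + 1 =>
      unfold imCount
      rw [filter_succ_card]
      have key : ∀ a : Fin (k+1),
          (univ.filter fun g : Fin n → Fin (k+1) =>
              Finset.image (Fin.cons a g) univ = univ).card
            = stirling n (k+1) * (k+1).factorial + stirling n k * k.factorial := by
        intro a
        have : (univ.filter fun g : Fin n → Fin (k+1) =>
            Finset.image (Fin.cons a g) univ = univ)
            = (univ.filter fun g : Fin n → Fin (k+1) => Finset.image g univ = univ)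
              ∪ (univ.filter fun g : Fin n → Fin (k+1) =>
                  Finset.image g univ = univ.erase a) := by
          ext g
          simp only [mem_filter, mem_univ, true_and, mem_union]
          rw [image_cons, insert_eq_univ_iff]
        rw [this, card_union_of_disjoint]
        · have h1 : imCount n (univ : Finset (Fin (k+1))) = stirling n (k+1) * (k+1).factorial :=
            ih (k+1)
          have h2 : imCount n ((univ : Finset (Fin (k+1))).erase a)
              = stirling n k * k.factorial := by
            have hc : ((univ : Finset (Fin (k+1))).erase a).card = k := by
              rw [card_erase_of_mem (mem_univ a), card_univ, Fintype.card_fin]; omega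
            rw [imCount_eq, hc]
            exact ih k
          rw [show (univ.filter fun g : Fin n → Fin (k+1) => Finset.image g univ = univ).card
              = imCount n (univ : Finset (Fin (k+1))) from rfl,
            show (univ.filter fun g : Fin n → Fin (k+1) =>
              Finset.image g univ = univ.erase a).card
              = imCount n ((univ : Finset (Fin (k+1))).erase a) from rfl, h1, h2]
        · rw [disjoint_filter]
          intro g _ hg hg'
          have huniv : (univ : Finset (Fin (k+1))) = univ.erase a := hg ▸ hg'
          exact absurd (huniv ▸ mem_univ a) (notMem_erase a univ)
      rw [Finset.sum_congr rfl (fun a _ => key a), sum_const, card_univ, Fintype.card_fin,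
        smul_eq_mul]
      show _ = stirling (n+1) (k+1) * (k+1).factorial
      rw [show stirling (n+1) (k+1) = (k + 1) * stirling n (k + 1) + stirling n k from rfl,
        Nat.factorial_succ]
      ring

lemma count_image_card (n B k : ℕ) :
    (univ.filter fun g : Fin n → Fin B => (Finset.image g univ).card = k).card
      = B.choose k * (stirling n k * k.factorial) := by
  classical
  have hsplit : (univ.filter fun g : Fin n → Fin B => (Finset.image g univ).card = k)
      = (powersetCard k (univ : Finset (Fin B))).biUnion
          (fun s => univ.filter fun g : Fin n → Fin B => Finset.image g univ = s) := by
    ext g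
    simp only [mem_filter, mem_univ, true_and, mem_biUnion, mem_powersetCard_univ]
    constructor
    · intro h; exact ⟨_, h, rfl⟩
    · rintro ⟨s, hs, rfl⟩; exact hs
  rw [hsplit, card_biUnion]
  · have : ∀ s ∈ powersetCard k (univ : Finset (Fin B)),
        (univ.filter fun g : Fin n → Fin B => Finset.image g univ = s).card
          = stirling n k * k.factorial := by
      intro s hs
      have hc : s.card = k := (mem_powersetCard_univ).1 hs
      have := imCount_eq n s
      unfold imCount at this
      rw [this, hc]
      exact T_eq n k
    rw [Finset.sum_congr rfl this, sum_const, card_powersetCard, card_univ, Fintype.card_fin,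
      smul_eq_mul]
  · intro s hs t ht hst
    simp only [Function.onFun]
    rw [disjoint_filter]
    intro g _ hg hg'
    exact hst (hg ▸ hg')

/-- The number of functions `f : Fin μ → Fin (B·ν)` whose values lie in at most `ω`
of the `B` consecutive blocks of size `ν` equals `Σ_{k=1}^{ω} S(μ,k) · P(B,k) · ν^μ`. -/
theorem count_functions_at_most_omega_blocks (B ν μ ω : ℕ)
    (hB : 0 < B) (hν : 0 < ν) (hμ : 0 < μ) (hω : 1 ≤ ω) :
    (Finset.univ.filter (fun f : Fin μ → Fin (B * ν) =>
        (Finset.image (fun i => (f i : ℕ) / ν) Finset.univ).card ≤ ω)).card =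
      ∑ k ∈ Finset.Icc 1 ω, stirling μ k * B.descFactorial k * ν ^ μ := by
  classical
  -- Step 1: rewrite the block predicate via `Fin.divNat`
  have hpred : ∀ f : Fin μ → Fin (B * ν),
      (Finset.image (fun i => (f i : ℕ) / ν) Finset.univ).card
        = (Finset.image (fun i => Fin.divNat (f i)) Finset.univ).card := by
    intro f
    have : (fun i : Fin μ => (f i : ℕ) / ν) = Fin.val ∘ (fun i => Fin.divNat (f i)) := by
      funext i; simp [Fin.coe_divNat]
    rw [this, ← Finset.image_image, Finset.card_image_of_injective _ Fin.val_injective]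
  -- Step 2: split into block part and within-block part
  have hsplit : (Finset.univ.filter (fun f : Fin μ → Fin (B * ν) =>
      (Finset.image (fun i => (f i : ℕ) / ν) Finset.univ).card ≤ ω)).card
      = (univ.filter fun g : Fin μ → Fin B => (Finset.image g univ).card ≤ ω).card * ν ^ μ := by
    rw [show (univ.filter fun g : Fin μ → Fin B => (Finset.image g univ).card ≤ ω).card * ν ^ μ
        = ((univ.filter fun g : Fin μ → Fin B => (Finset.image g univ).card ≤ ω) ×ˢ
            (univ : Finset (Fin μ → Fin ν))).card from by
      rw [card_product, card_univ]; simp [Fintype.card_fun]]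
    refine card_nbij' (fun f => (fun i => Fin.divNat (f i), fun i => Fin.modNat (f i)))
      (fun p => fun i => finProdFinEquiv (p.1 i, p.2 i)) ?_ ?_ ?_ ?_
    · intro f hf
      rw [mem_coe, mem_filter] at hf
      rw [mem_coe, mem_product, mem_filter]
      exact ⟨⟨mem_univ _, by rw [← hpred f]; exact hf.2⟩, mem_univ _⟩
    · rintro ⟨g, h⟩ hp
      rw [mem_coe, mem_product, mem_filter] at hp
      rw [mem_coe, mem_filter]
      refine ⟨mem_univ _, ?_⟩
      rw [hpred]
      have : (fun i => Fin.divNat (finProdFinEquiv (g i, h i))) = g := by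
        funext i
        have := finProdFinEquiv.symm_apply_apply (g i, h i)
        simp only [finProdFinEquiv] at this ⊢
        exact congrArg Prod.fst this
      rw [this]
      exact hp.1.2
    · intro f _
      funext i
      have := finProdFinEquiv.apply_symm_apply (f i)
      simpa [finProdFinEquiv] using this
    · rintro ⟨g, h⟩ _
      have : ∀ i, finProdFinEquiv.symm (finProdFinEquiv (g i, h i)) = (g i, h i) := fun i =>
        finProdFinEquiv.symm_apply_apply (g i, h i)
      simp only [finProdFinEquiv] at this
      ext i
      · exact congrArg Fin.val (congrArg Prod.fst (this i))
      · exact congrArg Fin.val (congrArg Prod.snd (this i))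
  rw [hsplit]
  -- Step 3: count the block parts
  have hble : (univ.filter fun g : Fin μ → Fin B => (Finset.image g univ).card ≤ ω)
      = (Finset.Icc 1 ω).biUnion
          (fun k => univ.filter fun g : Fin μ → Fin B => (Finset.image g univ).card = k) := by
    ext g
    simp only [mem_filter, mem_univ, true_and, mem_biUnion, Finset.mem_Icc]
    constructor
    · intro h
      refine ⟨(Finset.image g univ).card, ⟨?_, h⟩, rfl⟩
      rw [Nat.one_le_iff_ne_zero, ← Nat.pos_iff_ne_zero, card_pos]
      exact ⟨g ⟨0, hμ⟩, mem_image_of_mem _ (mem_univ _)⟩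
    · rintro ⟨k, hk, rfl⟩; exact hk.2
  rw [hble, card_biUnion, Finset.sum_mul]
  · refine Finset.sum_congr rfl fun k _ => ?_
    rw [count_image_card, Nat.descFactorial_eq_factorial_mul_choose]
    ring
  · intro s hs t ht hst
    simp only [Function.onFun]
    rw [disjoint_filter]
    intro g _ hg hg'
    exact hst (hg ▸ hg')
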